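/- arXiv:2510.07264 — 4 statements merged into one kernel-verified Lean document; each statement's English description precedes it below -/
import Mathlib

section
/- Let a > 0, B > 0, A > 0, b ∈ ℝ, and let G : ℝ → ℂ be a bounded measurable function. Then ∫_ℝ e^{−A(ay+b)²}/(B·√|ay+b|) · G(y) dy = (Γ(1/4)/(2 a A^{1/4} B)) · ∫_0^∞ f(u)·[ G((−√u − b)/a) + G((√u − b)/a) ] du, where f(u) = (A^{1/4}/Γ(1/4))·u^{−3/4}·e^{−Au} is the probability density of the Gamma distribution with shape 1/4 and rate A. Consequently, | ∫_ℝ e^{−A(ay+b)²}/(B·√|ay+b|) · G(y) dy | ≤ (Γ(1/4)·A^{−1/4}/(a B))·sup_{y∈ℝ} |G(y)|. -/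
/-!
Substituting `x = a y + b` (a factor `1/a`) and then `u = x²` on each half-line turns the
kernel `e^{-A x²} / (B √|x|) dx` into `u^{-3/4} e^{-A u} / (2B) du`, which is
`Γ(1/4) / (2 A^{1/4} B)` times the Gamma(1/4, A) density; the two half-lines contribute the
samples `G ((∓√u - b) / a)`. Since the density integrates to `1`, the bound follows from
`‖G (…) + G (…)‖ ≤ 2 sup ‖G‖`.
-/

open MeasureTheory Real Set

section ChangeOfVariables

variable {E : Type*} [NormedAddCommGroup E] [NormedSpace ℝ E]

lemma abs_half_mul_rpow_half_sub_one {x : ℝ} (hx : 0 < x) :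
    |(1 / 2 : ℝ)| * x ^ ((1 : ℝ) / 2 - 1) = (2 * √x)⁻¹ := by
  rw [abs_of_pos one_half_pos, sub_eq_add_neg, rpow_add hx, rpow_neg_one, ← sqrt_eq_rpow]
  have := sqrt_pos.2 hx
  field_simp
  rw [sq_sqrt hx.le]

lemma integral_comp_sqrt_Ioi (φ : ℝ → E) :
    ∫ u in Ioi 0, (2 * √u)⁻¹ • φ √u = ∫ x in Ioi 0, φ x := by
  rw [← integral_comp_rpow_Ioi φ one_half_pos.ne']
  refine setIntegral_congr_fun measurableSet_Ioi fun u hu => ?_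
  rw [abs_half_mul_rpow_half_sub_one hu, sqrt_eq_rpow]

lemma integrableOn_Ioi_comp_sqrt_iff (φ : ℝ → E) :
    IntegrableOn (fun u => (2 * √u)⁻¹ • φ √u) (Ioi 0) ↔ IntegrableOn φ (Ioi 0) := by
  rw [← integrableOn_Ioi_comp_rpow_iff φ one_half_pos.ne']
  refine integrableOn_congr_fun (fun u hu => ?_) measurableSet_Ioi
  rw [abs_half_mul_rpow_half_sub_one hu, sqrt_eq_rpow]

theorem integral_eq_integral_Ioi_sqrt {φ : ℝ → E}
    (hneg : IntegrableOn (fun u => (2 * √u)⁻¹ • φ (-√u)) (Ioi 0))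
    (hpos : IntegrableOn (fun u => (2 * √u)⁻¹ • φ √u) (Ioi 0)) :
    ∫ x, φ x = ∫ u in Ioi 0, (2 * √u)⁻¹ • (φ (-√u) + φ √u) := by
  have hIoi : IntegrableOn φ (Ioi 0) := (integrableOn_Ioi_comp_sqrt_iff φ).1 hpos
  have hIic : IntegrableOn φ (Iic 0) := by
    rw [integrableOn_Iic_iff_integrableOn_Iio]
    simpa only [neg_neg] using IntegrableOn.comp_neg_Iio (μ := volume) (c := 0)
      (f := fun x => φ (-x)) (by rwa [neg_zero, ← integrableOn_Ioi_comp_sqrt_iff])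
  simp_rw [smul_add]
  rw [integral_add hneg hpos, integral_comp_sqrt_Ioi (fun x => φ (-x)), integral_comp_sqrt_Ioi,
    integral_comp_neg_Ioi, neg_zero, intervalIntegral.integral_Iic_add_Ioi hIic hIoi]

theorem integral_comp_mul_add (φ : ℝ → E) (a b : ℝ) :
    ∫ y, φ (a * y + b) = |a⁻¹| • ∫ x, φ x := by
  rw [Measure.integral_comp_mul_left (fun x => φ (x + b)), integral_add_right_eq_self]

end ChangeOfVariables

lemma integral_gamma_density_Ioi {α r : ℝ} (hα : 0 < α) (hr : 0 < r) :
    ∫ u in Ioi 0, r ^ α / Gamma α * u ^ (α - 1) * exp (-r * u) = 1 := by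
  simp_rw [mul_assoc, neg_mul]
  rw [integral_const_mul, integral_rpow_mul_exp_neg_mul_Ioi hα hr, one_div, inv_rpow hr.le]
  have := (Gamma_pos_of_pos hα).ne'
  have := (rpow_pos_of_pos hr α).ne'
  field_simp

lemma norm_integral_density_mul_le {α 𝕜 : Type*} [MeasurableSpace α] [RCLike 𝕜]
    {μ : Measure α} {f : α → ℝ} {g : α → 𝕜} {M : ℝ} (hf_nonneg : ∀ᵐ x ∂μ, 0 ≤ f x)
    (hf_one : ∫ x, f x ∂μ = 1) (hg : ∀ᵐ x ∂μ, ‖g x‖ ≤ M) :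
    ‖∫ x, (f x : 𝕜) * g x ∂μ‖ ≤ M := by
  have hf : Integrable f μ := .of_integral_ne_zero (by simp [hf_one])
  calc ‖∫ x, (f x : 𝕜) * g x ∂μ‖ ≤ ∫ x, f x * M ∂μ := by
        refine norm_integral_le_of_norm_le (hf.mul_const M) ?_
        filter_upwards [hf_nonneg, hg] with x hfx hgx
        rw [norm_mul, RCLike.norm_ofReal, abs_of_nonneg hfx]
        exact mul_le_mul_of_nonneg_left hgx hfx
    _ = M := by rw [integral_mul_const, hf_one, one_mul]

theorem integral_kernel_comp_mul_add_mul_eq_integral_Ioi {a b C : ℝ} {k w : ℝ → ℝ} {G : ℝ → ℂ}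
    (ha : a ≠ 0) (hkw : ∀ u, 0 < u → ∀ x, |x| = √u → (2 * √u)⁻¹ * k x = w u)
    (hw : IntegrableOn w (Ioi 0)) (hG : Measurable G) (hC : ∀ y, ‖G y‖ ≤ C) :
    ∫ y, (k (a * y + b) : ℂ) * G y
      = |a⁻¹| • ∫ u in Ioi 0, (w u : ℂ) * (G ((-√u - b) / a) + G ((√u - b) / a)) := by
  set φ : ℝ → ℂ := fun x => (k x : ℂ) * G ((x - b) / a)
  have hsample {u : ℝ} (hu : 0 < u) {x : ℝ} (hx : |x| = √u) :
      (2 * √u)⁻¹ • φ x = (w u : ℂ) * G ((x - b) / a) := by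
    rw [Complex.real_smul, ← mul_assoc, ← Complex.ofReal_mul, hkw u hu x hx]
  have hsample_int {σ : ℝ → ℝ} (hσ : Measurable σ) (hσu : ∀ u, |σ u| = √u) :
      IntegrableOn (fun u => (2 * √u)⁻¹ • φ (σ u)) (Ioi 0) := by
    refine IntegrableOn.congr_fun ?_ (fun u hu => (hsample hu (hσu u)).symm) measurableSet_Ioi
    exact hw.ofReal.mul_bdd
      (hG.comp ((hσ.sub_const b).div_const a)).aestronglyMeasurable (ae_of_all _ fun u => hC _)
  have hsqrt_abs (u : ℝ) : |√u| = √u := abs_of_nonneg (sqrt_nonneg u)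
  have hneg_sqrt_abs (u : ℝ) : |-√u| = √u := (abs_neg _).trans (hsqrt_abs u)
  calc ∫ y, (k (a * y + b) : ℂ) * G y = ∫ y, φ (a * y + b) := by
        simp only [φ, add_sub_cancel_right, mul_div_cancel_left₀ _ ha]
    _ = |a⁻¹| • ∫ u in Ioi 0, (2 * √u)⁻¹ • (φ (-√u) + φ √u) := by
        rw [integral_comp_mul_add, integral_eq_integral_Ioi_sqrt
          (hsample_int measurable_id.sqrt.neg hneg_sqrt_abs)
          (hsample_int measurable_id.sqrt hsqrt_abs)]
    _ = _ := by
        congr 1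
        refine setIntegral_congr_fun measurableSet_Ioi fun u hu => ?_
        rw [smul_add, hsample hu (hneg_sqrt_abs u), hsample hu (hsqrt_abs u), mul_add]

lemma inv_two_sqrt_mul_kernel_eq_gamma_density {A B u x : ℝ} (hA : 0 < A) (hB : 0 < B)
    (hu : 0 < u) (hx : |x| = √u) :
    (2 * √u)⁻¹ * (exp (-A * x ^ 2) / (B * √|x|))
      = Gamma (1 / 4) / (2 * A ^ ((1 : ℝ) / 4) * B) *
          (A ^ ((1 : ℝ) / 4) / Gamma (1 / 4) * u ^ (-(3 : ℝ) / 4) * exp (-A * u)) := by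
  have hx2 : x ^ 2 = u := by rw [← sq_abs, hx, sq_sqrt hu.le]
  have hsqrt : √u = u ^ ((1 : ℝ) / 2) := sqrt_eq_rpow u
  have hsqrt_sqrt : √√u = u ^ ((1 : ℝ) / 4) := by
    rw [hsqrt, sqrt_eq_rpow, ← rpow_mul hu.le]; norm_num
  have h34 : u ^ (-(3 : ℝ) / 4) = (u ^ ((1 : ℝ) / 2) * u ^ ((1 : ℝ) / 4))⁻¹ := by
    rw [← rpow_add hu, ← rpow_neg hu.le]; norm_num
  have := rpow_pos_of_pos hu ((1 : ℝ) / 2)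
  have := rpow_pos_of_pos hu ((1 : ℝ) / 4)
  have := rpow_pos_of_pos hA ((1 : ℝ) / 4)
  have := Gamma_pos_of_pos (by norm_num : (0 : ℝ) < 1 / 4)
  rw [hx2, hx, hsqrt_sqrt, hsqrt, h34]
  field_simp

/-- **Integral approximation via Gamma-distributed samples.** For `a, B, A > 0`, `b ∈ ℝ`
and a bounded measurable `G : ℝ → ℂ`,
`∫ e^{−A(ay+b)²}/(B√|ay+b|)·G(y) dy
  = (Γ(1/4)/(2aA^{1/4}B)) · ∫_0^∞ f(u)·(G((−√u−b)/a) + G((√u−b)/a)) du`,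
where `f(u) = (A^{1/4}/Γ(1/4))·u^{−3/4}·e^{−Au}` is the density of the Gamma distribution
with shape `1/4` and rate `A`; consequently the left-hand side is bounded in magnitude by
`(Γ(1/4)·A^{−1/4}/(aB))·sup_y |G(y)|`. -/
theorem integral_via_gamma_samples (a b A B : ℝ) (ha : 0 < a) (hA : 0 < A) (hB : 0 < B)
    (G : ℝ → ℂ) (hG : Measurable G) (hbd : ∃ C, ∀ y, ‖G y‖ ≤ C) :
    (∫ y : ℝ, (↑(Real.exp (-A * (a * y + b) ^ 2) / (B * Real.sqrt |a * y + b|)) : ℂ) * G y)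
        = (↑(Real.Gamma (1 / 4) / (2 * a * A ^ ((1 : ℝ) / 4) * B)) : ℂ) *
          ∫ u in Set.Ioi (0 : ℝ),
            (↑(A ^ ((1 : ℝ) / 4) / Real.Gamma (1 / 4) * u ^ (-(3 : ℝ) / 4)
                * Real.exp (-A * u)) : ℂ) *
              (G ((-Real.sqrt u - b) / a) + G ((Real.sqrt u - b) / a)) ∧
    ‖∫ y : ℝ, (↑(Real.exp (-A * (a * y + b) ^ 2) / (B * Real.sqrt |a * y + b|)) : ℂ) * G y‖
        ≤ Real.Gamma (1 / 4) * A ^ (-(1 : ℝ) / 4) / (a * B) * ⨆ y : ℝ, ‖G y‖ := by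
  obtain ⟨C, hC⟩ := hbd
  set f : ℝ → ℝ := fun u =>
    A ^ ((1 : ℝ) / 4) / Gamma (1 / 4) * u ^ (-(3 : ℝ) / 4) * exp (-A * u)
  have hf_one : ∫ u in Ioi 0, f u = 1 := by
    convert integral_gamma_density_Ioi (α := 1 / 4) (by norm_num) hA using 5; norm_num
  have hf : IntegrableOn f (Ioi 0) := .of_integral_ne_zero (by simp [hf_one])
  have heq := integral_kernel_comp_mul_add_mul_eq_integral_Ioi (b := b) ha.ne'
    (fun u hu x hx => inv_two_sqrt_mul_kernel_eq_gamma_density hA hB hu hx) (hf.const_mul _) hG hC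
  rw [abs_of_pos (inv_pos.2 ha)] at heq
  refine (and_iff_left_of_imp fun h => ?_).2 (heq.trans ?_)
  · have hGM (y : ℝ) : ‖G y‖ ≤ ⨆ y, ‖G y‖ :=
      le_ciSup ⟨C, by rintro _ ⟨y, rfl⟩; exact hC y⟩ y
    have hf_nonneg : ∀ᵐ u ∂volume.restrict (Ioi 0), 0 ≤ f u :=
      ae_restrict_of_forall_mem measurableSet_Ioi fun u (hu : 0 < u) => by positivity
    rw [h, norm_mul, Complex.norm_real, norm_of_nonneg (by positivity)]
    calc _ ≤ Gamma (1 / 4) / (2 * a * A ^ ((1 : ℝ) / 4) * B) * (2 * ⨆ y, ‖G y‖) := by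
          gcongr
          refine norm_integral_density_mul_le hf_nonneg hf_one (ae_of_all _ fun u => ?_)
          exact (norm_add_le _ _).trans (by linarith [hGM ((-√u - b) / a), hGM ((√u - b) / a)])
      _ = _ := by
          rw [show -(1 : ℝ) / 4 = -(1 / 4) by ring, rpow_neg hA.le]
          field_simp
  · rw [← integral_smul, ← integral_const_mul]
    refine setIntegral_congr_fun measurableSet_Ioi fun u _ => ?_
    rw [Complex.real_smul]
    push_cast
    ring
end

section
/- Let m ≥ 1, let g : ℝ^{2m} → ℂ be measurable, and let C₁, C₂, p, τ ≥ 0 be constants such that |g(x)| ≤ C₁ for all x ∈ ℝ^{2m} and ∫_{ℝ^{2m}} |g(x)|² dx ≤ π^m·C₂. Then ∫_{ℝ^{2m}} e^{−2p‖x‖²}·|g(x)|² dx ≤ π^m·( (τ^m/m!)·C₁² + e^{−2pτ}·C₂ ), where ‖x‖ denotes the Euclidean norm on ℝ^{2m}. -/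
/-!
On the ball `‖x‖² ≤ τ` the Gaussian weight is at most `1` and `|g|² ≤ C₁²`, so that part of the
integral is at most `C₁²` times the volume `π^m τ^m / m!` of the ball in `ℝ^{2m}`. Off the ball the
weight is at most `e^{-2pτ}`, and the remaining integral of `|g|²` is at most `π^m C₂`.
-/

open MeasureTheory Real ENNReal NNReal

namespace MeasureTheory

variable {α : Type*} [MeasurableSpace α] {μ : Measure α}

theorem lintegral_mul_le_of_split {s : Set α} (hs : MeasurableSet s) {w f : α → ℝ≥0∞}
    {a b : ℝ≥0∞} (hb : b ≠ ∞) (h_in : ∀ x ∈ s, w x * f x ≤ a) (h_out : ∀ x ∈ sᶜ, w x ≤ b) :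
    ∫⁻ x, w x * f x ∂μ ≤ a * μ s + b * ∫⁻ x, f x ∂μ := by
  rw [← lintegral_add_compl _ hs]
  gcongr
  · calc ∫⁻ x in s, w x * f x ∂μ ≤ ∫⁻ _ in s, a ∂μ := setLIntegral_mono' hs h_in
      _ = a * μ s := setLIntegral_const s a
  · calc ∫⁻ x in sᶜ, w x * f x ∂μ ≤ ∫⁻ x in sᶜ, b * f x ∂μ :=
          setLIntegral_mono' hs.compl fun x hx => mul_le_mul_left (h_out x hx) _
      _ = b * ∫⁻ x in sᶜ, f x ∂μ := lintegral_const_mul' b f hb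
      _ ≤ b * ∫⁻ x, f x ∂μ := mul_le_mul_right (setLIntegral_le_lintegral _ _) _

end MeasureTheory

namespace InnerProductSpace

variable {E : Type*} [NormedAddCommGroup E] [InnerProductSpace ℝ E] [FiniteDimensional ℝ E]
  [MeasurableSpace E] [BorelSpace E] [Nontrivial E]

theorem volume_closedBall_sqrt_of_dim_even {k : ℕ} (hk : Module.finrank ℝ E = 2 * k) (x : E)
    {τ : ℝ} (hτ : 0 ≤ τ) :
    volume (Metric.closedBall x √τ) = ENNReal.ofReal (π ^ k * τ ^ k / k.factorial) := by
  rw [volume_closedBall_of_dim_even hk, hk, ← ENNReal.ofReal_pow (sqrt_nonneg τ), pow_mul,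
    sq_sqrt hτ, ← ENNReal.ofReal_mul (by positivity), mul_div_assoc', mul_comm]

end InnerProductSpace

theorem exp_neg_mul_sq_norm_le_of_sqrt_lt {E : Type*} [SeminormedAddCommGroup E] {p τ : ℝ}
    (hp : 0 ≤ p) {x : E} (hx : √τ < ‖x‖) : exp (-2 * p * ‖x‖ ^ 2) ≤ exp (-2 * p * τ) := by
  have hτx : τ < ‖x‖ ^ 2 := (sqrt_lt' ((sqrt_nonneg τ).trans_lt hx)).mp hx
  exact exp_le_exp.mpr (by nlinarith)

theorem purity_decay_splitting_general (m : ℕ) (hm : 1 ≤ m)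
    (g : EuclideanSpace ℝ (Fin (2 * m)) → ℂ)
    (C₁ C₂ p τ : ℝ) (hC₂ : 0 ≤ C₂) (hp : 0 ≤ p) (hτ : 0 ≤ τ)
    (hbd : ∀ x, ‖g x‖ ≤ C₁)
    (hL2 : (∫⁻ x, (‖g x‖₊ : ℝ≥0∞) ^ 2) ≤ ENNReal.ofReal (Real.pi ^ m * C₂)) :
    (∫⁻ x, ENNReal.ofReal (Real.exp (-2 * p * ‖x‖ ^ 2)) * (‖g x‖₊ : ℝ≥0∞) ^ 2)
      ≤ ENNReal.ofReal (Real.pi ^ m *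
          ((τ ^ m / (m.factorial : ℝ)) * C₁ ^ 2 + Real.exp (-2 * p * τ) * C₂)) := by
  have : Nonempty (Fin (2 * m)) := ⟨⟨0, by omega⟩⟩
  have h_in : ∀ x ∈ Metric.closedBall (0 : EuclideanSpace ℝ (Fin (2 * m))) √τ,
      ENNReal.ofReal (exp (-2 * p * ‖x‖ ^ 2)) * (‖g x‖₊ : ℝ≥0∞) ^ 2 ≤ ENNReal.ofReal (C₁ ^ 2) := by
    intro x _
    have h_weight : ENNReal.ofReal (exp (-2 * p * ‖x‖ ^ 2)) ≤ 1 :=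
      ofReal_le_one.mpr (exp_le_one_iff.mpr (by nlinarith))
    have h_sq : (‖g x‖₊ : ℝ≥0∞) ^ 2 ≤ ENNReal.ofReal (C₁ ^ 2) := by
      rw [← enorm_eq_nnnorm, ← ofReal_norm, ← ENNReal.ofReal_pow (norm_nonneg _)]
      exact ofReal_le_ofReal (pow_le_pow_left₀ (norm_nonneg _) (hbd x) 2)
    simpa using mul_le_mul' h_weight h_sq
  have h_out : ∀ x ∈ (Metric.closedBall (0 : EuclideanSpace ℝ (Fin (2 * m))) √τ)ᶜ,
      ENNReal.ofReal (exp (-2 * p * ‖x‖ ^ 2)) ≤ ENNReal.ofReal (exp (-2 * p * τ)) := fun x hx =>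
    ofReal_le_ofReal (exp_neg_mul_sq_norm_le_of_sqrt_lt hp (by simpa [dist_zero_right] using hx))
  calc _ ≤ ENNReal.ofReal (C₁ ^ 2) * volume (Metric.closedBall 0 √τ)
        + ENNReal.ofReal (exp (-2 * p * τ)) * ∫⁻ x, (‖g x‖₊ : ℝ≥0∞) ^ 2 :=
        lintegral_mul_le_of_split Metric.isClosed_closedBall.measurableSet ofReal_ne_top h_in h_out
    _ ≤ ENNReal.ofReal (C₁ ^ 2) * ENNReal.ofReal (π ^ m * τ ^ m / m.factorial)
        + ENNReal.ofReal (exp (-2 * p * τ)) * ENNReal.ofReal (π ^ m * C₂) := by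
        rw [InnerProductSpace.volume_closedBall_sqrt_of_dim_even finrank_euclideanSpace_fin 0 hτ]
        gcongr
    _ = _ := by
        rw [← ofReal_mul (by positivity), ← ofReal_mul (exp_pos _).le,
          ← ofReal_add (by positivity) (by positivity)]
        ring_nf

/-- **Gaussian-damped splitting inequality (purity decay under the depolarizing map).**
If `g : ℝ^{2m} → ℂ` satisfies `|g(x)| ≤ C₁` pointwise and `∫ |g|² ≤ π^m·C₂`, then for
`p, τ ≥ 0`,
`∫ e^{−2p‖x‖²}·|g(x)|² dx ≤ π^m·((τ^m/m!)·C₁² + e^{−2pτ}·C₂)`. -/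
theorem purity_decay_splitting (m : ℕ) (hm : 1 ≤ m)
    (g : EuclideanSpace ℝ (Fin (2 * m)) → ℂ) (hg : Measurable g)
    (C₁ C₂ p τ : ℝ) (hC₁ : 0 ≤ C₁) (hC₂ : 0 ≤ C₂) (hp : 0 ≤ p) (hτ : 0 ≤ τ)
    (hbd : ∀ x, ‖g x‖ ≤ C₁)
    (hL2 : (∫⁻ x, (‖g x‖₊ : ℝ≥0∞) ^ 2) ≤ ENNReal.ofReal (Real.pi ^ m * C₂)) :
    (∫⁻ x, ENNReal.ofReal (Real.exp (-2 * p * ‖x‖ ^ 2)) * (‖g x‖₊ : ℝ≥0∞) ^ 2)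
      ≤ ENNReal.ofReal (Real.pi ^ m *
          ((τ ^ m / (m.factorial : ℝ)) * C₁ ^ 2 + Real.exp (-2 * p * τ) * C₂)) :=
  purity_decay_splitting_general m hm g C₁ C₂ p τ hC₂ hp hτ hbd hL2
end

section
/- Let m ≥ 1, p ≥ 0, C ≥ 0, and let g : ℝ^{2m} → ℂ be measurable with |g(x)| ≤ C for all x ∈ ℝ^{2m} and ∫_{ℝ^{2m}} |g(x)|² dx ≤ π^m·C². Then ∫_{ℝ^{2m}} e^{−2p‖x‖²}·|g(x)|² dx ≤ π^m·C²·( 0.9^m + e^{−1.8·p·m/e} ), where e is Euler's number and ‖x‖ denotes the Euclidean norm on ℝ^{2m}. -/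
/-!
Split the integral at the ball of radius `√τ`, `τ = 0.9·m/e`. Inside the ball the Gaussian weight
is at most `1` and `|g|² ≤ C²`, so that part is at most `C²` times the volume `(πτ)^m / m!` of the
ball, which `m! ≥ (m/e)^m` bounds by `π^m C² 0.9^m`. Outside the ball the weight is at most
`e^{-2pτ}`, and the remaining `L²` mass of `g` is at most `π^m C²`.
-/

open MeasureTheory Real ENNReal NNReal
open scoped Nat

theorem div_exp_one_pow_le_factorial (n : ℕ) : ((n : ℝ) / exp 1) ^ n ≤ n ! := by
  have h := Real.pow_div_factorial_le_exp (x := n) n.cast_nonneg n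
  rw [← exp_one_pow, div_le_iff₀ (by positivity)] at h
  rw [div_pow, div_le_iff₀ (by positivity)]
  linarith

theorem volume_closedBall_sqrt_mul_div_exp_one_le (m : ℕ) (hm : 1 ≤ m) {a : ℝ} (ha : 0 ≤ a) :
    volume (Metric.closedBall (0 : EuclideanSpace ℝ (Fin (2 * m))) √(a * m / exp 1))
      ≤ ENNReal.ofReal ((π * a) ^ m) := by
  have : Nontrivial (EuclideanSpace ℝ (Fin (2 * m))) :=
    Module.nontrivial_of_finrank_pos (R := ℝ) (by simp; omega)
  rw [InnerProductSpace.volume_closedBall_of_dim_even (k := m) (by simp) _ _,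
    finrank_euclideanSpace_fin, ← ENNReal.ofReal_pow (sqrt_nonneg _),
    ← ENNReal.ofReal_mul (by positivity), pow_mul, sq_sqrt (by positivity)]
  refine ENNReal.ofReal_le_ofReal ?_
  calc (a * m / exp 1) ^ m * (π ^ m / m !) = (π * a) ^ m * ((m / exp 1) ^ m / m !) := by ring
    _ ≤ (π * a) ^ m := mul_le_of_le_one_right (by positivity)
        (div_le_one_of_le₀ (div_exp_one_pow_le_factorial m) (by positivity))

theorem lintegral_exp_neg_mul_norm_sq_mul_le {E : Type*} [SeminormedAddCommGroup E]
    [MeasurableSpace E] [OpensMeasurableSpace E] (μ : Measure E) {f : E → ℝ≥0∞} {M : ℝ≥0∞}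
    (hfM : ∀ x, f x ≤ M) {c r : ℝ} (hc : 0 ≤ c) (hr : 0 ≤ r) :
    ∫⁻ x, ENNReal.ofReal (exp (-c * ‖x‖ ^ 2)) * f x ∂μ
      ≤ M * μ (Metric.closedBall 0 r) + ENNReal.ofReal (exp (-c * r ^ 2)) * ∫⁻ x, f x ∂μ := by
  set s := Metric.closedBall (0 : E) r
  have hs : MeasurableSet s := Metric.isClosed_closedBall.measurableSet
  have inside : ∀ x ∈ s, ENNReal.ofReal (exp (-c * ‖x‖ ^ 2)) * f x ≤ M := fun x _ => by
    refine (mul_le_of_le_one_left' ?_).trans (hfM x)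
    exact ENNReal.ofReal_le_one.mpr (exp_le_one_iff.mpr (by nlinarith [sq_nonneg ‖x‖]))
  have outside : ∀ x ∈ sᶜ, ENNReal.ofReal (exp (-c * ‖x‖ ^ 2)) * f x
      ≤ ENNReal.ofReal (exp (-c * r ^ 2)) * f x := fun x hx => by
    have hrx : r ^ 2 ≤ ‖x‖ ^ 2 := pow_le_pow_left₀ hr (by simpa [s] using hx : r < ‖x‖).le 2
    refine mul_le_mul' (ENNReal.ofReal_le_ofReal (exp_le_exp.mpr ?_)) le_rfl
    nlinarith
  calc ∫⁻ x, ENNReal.ofReal (exp (-c * ‖x‖ ^ 2)) * f x ∂μ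
      = (∫⁻ x in s, ENNReal.ofReal (exp (-c * ‖x‖ ^ 2)) * f x ∂μ)
        + ∫⁻ x in sᶜ, ENNReal.ofReal (exp (-c * ‖x‖ ^ 2)) * f x ∂μ :=
        (lintegral_add_compl _ hs).symm
    _ ≤ (∫⁻ _ in s, M ∂μ) + ∫⁻ x in sᶜ, ENNReal.ofReal (exp (-c * r ^ 2)) * f x ∂μ :=
        add_le_add (setLIntegral_mono measurable_const inside) (setLIntegral_mono' hs.compl outside)
    _ = M * μ s + ENNReal.ofReal (exp (-c * r ^ 2)) * ∫⁻ x in sᶜ, f x ∂μ := by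
        rw [setLIntegral_const, lintegral_const_mul' _ _ ofReal_ne_top]
    _ ≤ M * μ s + ENNReal.ofReal (exp (-c * r ^ 2)) * ∫⁻ x, f x ∂μ := by
        grw [setLIntegral_le_lintegral sᶜ f]

theorem purity_decay_explicit_general (m : ℕ) (hm : 1 ≤ m) (p C : ℝ) (hp : 0 ≤ p) (hC : 0 ≤ C)
    (g : EuclideanSpace ℝ (Fin (2 * m)) → ℂ)
    (hbd : ∀ x, ‖g x‖ ≤ C)
    (hL2 : (∫⁻ x, (‖g x‖₊ : ℝ≥0∞) ^ 2) ≤ ENNReal.ofReal (Real.pi ^ m * C ^ 2)) :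
    (∫⁻ x, ENNReal.ofReal (Real.exp (-2 * p * ‖x‖ ^ 2)) * (‖g x‖₊ : ℝ≥0∞) ^ 2)
      ≤ ENNReal.ofReal (Real.pi ^ m * C ^ 2 *
          ((0.9 : ℝ) ^ m + Real.exp (-(1.8 : ℝ) * p * m / Real.exp 1))) := by
  set r := √(0.9 * m / exp 1)
  have hg_sq : ∀ x, (‖g x‖₊ : ℝ≥0∞) ^ 2 ≤ ENNReal.ofReal (C ^ 2) := fun x => by
    rw [ENNReal.ofReal_pow hC, ← enorm_eq_nnnorm, ← ofReal_norm]
    exact pow_le_pow_left' (ENNReal.ofReal_le_ofReal (hbd x)) 2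
  have hr_sq : -(2 * p) * r ^ 2 = -(1.8 : ℝ) * p * m / exp 1 := by
    rw [sq_sqrt (by positivity)]
    ring
  calc ∫⁻ x, ENNReal.ofReal (exp (-2 * p * ‖x‖ ^ 2)) * (‖g x‖₊ : ℝ≥0∞) ^ 2
      = ∫⁻ x, ENNReal.ofReal (exp (-(2 * p) * ‖x‖ ^ 2)) * (‖g x‖₊ : ℝ≥0∞) ^ 2 := by
        simp only [neg_mul]
    _ ≤ ENNReal.ofReal (C ^ 2) * volume (Metric.closedBall 0 r)
        + ENNReal.ofReal (exp (-(2 * p) * r ^ 2)) * ∫⁻ x, (‖g x‖₊ : ℝ≥0∞) ^ 2 :=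
        lintegral_exp_neg_mul_norm_sq_mul_le volume hg_sq (by positivity) (sqrt_nonneg _)
    _ ≤ ENNReal.ofReal (C ^ 2) * ENNReal.ofReal ((π * 0.9) ^ m)
        + ENNReal.ofReal (exp (-(2 * p) * r ^ 2)) * ENNReal.ofReal (π ^ m * C ^ 2) := by
        grw [volume_closedBall_sqrt_mul_div_exp_one_le m hm (by norm_num), hL2]
    _ = ENNReal.ofReal (π ^ m * C ^ 2 * (0.9 ^ m + exp (-(1.8 : ℝ) * p * m / exp 1))) := by
        rw [← ENNReal.ofReal_mul (by positivity), ← ENNReal.ofReal_mul (by positivity),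
          ← ENNReal.ofReal_add (by positivity) (by positivity), hr_sq]
        ring_nf

/-- **Explicit exponential purity decay under the depolarizing map.** If
`g : ℝ^{2m} → ℂ` satisfies `|g(x)| ≤ C` pointwise and `∫ |g|² ≤ π^m·C²`, then for `p ≥ 0`,
`∫ e^{−2p‖x‖²}·|g(x)|² dx ≤ π^m·C²·(0.9^m + e^{−1.8·p·m/e})`. -/
theorem purity_decay_explicit (m : ℕ) (hm : 1 ≤ m) (p C : ℝ) (hp : 0 ≤ p) (hC : 0 ≤ C)
    (g : EuclideanSpace ℝ (Fin (2 * m)) → ℂ) (hg : Measurable g)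
    (hbd : ∀ x, ‖g x‖ ≤ C)
    (hL2 : (∫⁻ x, (‖g x‖₊ : ℝ≥0∞) ^ 2) ≤ ENNReal.ofReal (Real.pi ^ m * C ^ 2)) :
    (∫⁻ x, ENNReal.ofReal (Real.exp (-2 * p * ‖x‖ ^ 2)) * (‖g x‖₊ : ℝ≥0∞) ^ 2)
      ≤ ENNReal.ofReal (Real.pi ^ m * C ^ 2 *
          ((0.9 : ℝ) ^ m + Real.exp (-(1.8 : ℝ) * p * m / Real.exp 1))) :=
  purity_decay_explicit_general m hm p C hp hC g hbd hL2
end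

section
/- Let μ be a Borel probability measure on ℝ with finite third absolute moment, and let δ > 0. Then | (2/δ²)·( 1 − ∫_ℝ e^{iδx} dμ(x) ) + (2/δ³)·( ∫_ℝ e^{iδ²x} dμ(x) − 1 ) − ∫_ℝ x² dμ(x) | ≤ (δ/3)·∫_ℝ |x|³ dμ(x) + δ·∫_ℝ x² dμ(x). -/
/-!
With `R_n(t) = e^{it} - ∑_{k<n} (it)^k / k!` one has `R_{n+1}' = i R_n` and `R_{n+1}(0) = 0`,
so by induction `|R_n(t)| ≤ |t|^n / n!`. Integrating against `μ` expands the characteristic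
function `φ` in terms of `mₖ = ∫ xᵏ dμ` and `M₃ = ∫ |x|³ dμ`:
`φ(δ) = 1 + iδ m₁ - δ² m₂ / 2 + E₃` with `|E₃| ≤ δ³ M₃ / 6`, and
`φ(δ²) = 1 + iδ² m₁ + E₂` with `|E₂| ≤ δ⁴ m₂ / 2`. In the finite difference the first moments
cancel and `(2/δ²)(δ² m₂ / 2) = m₂`, leaving `(2/δ³) E₂ - (2/δ²) E₃`.
-/

open MeasureTheory Complex Finset
open scoped Nat Interval

lemma hasDerivAt_sum_range_succ_inv_factorial_mul_pow (n : ℕ) (s : ℝ) :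
    HasDerivAt (fun s : ℝ => ∑ k ∈ range (n + 1), (k ! : ℂ)⁻¹ * (s * I) ^ k)
      ((∑ k ∈ range n, (k ! : ℂ)⁻¹ * (s * I) ^ k) * I) s := by
  have hterm (k : ℕ) : HasDerivAt (fun s : ℝ => ((k + 1)! : ℂ)⁻¹ * (s * I) ^ (k + 1))
      ((k ! : ℂ)⁻¹ * (s * I) ^ k * I) s := by
    refine (((hasDerivAt_pow (k + 1) _).comp (s : ℂ) (hasDerivAt_mul_const I)).comp_ofReal
      |>.const_mul ((k + 1)! : ℂ)⁻¹).congr_deriv ?_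
    push_cast [Nat.factorial_succ, add_tsub_cancel_right]
    field_simp
  simp_rw [sum_range_succ', Nat.factorial_zero, pow_zero, Nat.cast_one, inv_one, mul_one,
    sum_mul]
  exact (HasDerivAt.fun_sum fun k _ => hterm k).add_const 1

theorem norm_exp_mul_I_sub_sum_le (n : ℕ) (t : ℝ) :
    ‖exp (t * I) - ∑ k ∈ range n, (k ! : ℂ)⁻¹ * (t * I) ^ k‖ ≤ |t| ^ n / n ! := by
  induction n generalizing t with
  | zero => simp [norm_exp_ofReal_mul_I]
  | succ n ih =>
    set R : ℕ → ℝ → ℂ := fun m s => exp (s * I) - ∑ k ∈ range m, (k ! : ℂ)⁻¹ * (s * I) ^ k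
    have hR : ∀ s, HasDerivAt (R (n + 1)) (R n s * I) s := fun s => by
      simpa [R, sub_mul] using ((hasDerivAt_id s).ofReal_comp.mul_const I).cexp.fun_sub
        (hasDerivAt_sum_range_succ_inv_factorial_mul_pow n s)
    have hRc : Continuous (R n) := by fun_prop
    have hR0 : R (n + 1) 0 = 0 := by simp [R, sum_range_succ']
    calc ‖R (n + 1) t‖ = ‖∫ s in (0 : ℝ)..t, R n s * I‖ := by
          rw [intervalIntegral.integral_eq_sub_of_hasDerivAt (fun s _ => hR s)
            ((hRc.mul continuous_const).intervalIntegrable _ _), hR0, sub_zero]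
      _ ≤ ∫ s in Ι 0 t, ‖R n s * I‖ :=
          intervalIntegral.norm_integral_le_integral_norm_uIoc
      _ ≤ ∫ s in Ι 0 t, |s| ^ n / n ! := by
          refine integral_mono_of_nonneg (ae_of_all _ fun _ => norm_nonneg _) ?_
            (ae_of_all _ fun s => by simpa using ih s)
          exact (by fun_prop : Continuous fun s : ℝ => |s| ^ n / n !).integrableOn_uIcc.mono_set
            Set.uIoc_subset_uIcc
      _ = |t| ^ (n + 1) / (n + 1)! := by
          rw [integral_div]
          have := integral_pow_abs_sub_uIoc (a := 0) (b := t) (n := n)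
          simp only [sub_zero] at this
          rw [this, Nat.factorial_succ]
          push_cast
          field_simp

lemma integrable_pow_of_integrable_abs_pow {μ : Measure ℝ} [IsFiniteMeasure μ] {k n : ℕ}
    (hkn : k ≤ n) (hμ : Integrable (fun x => |x| ^ n) μ) :
    Integrable (fun x => x ^ k) μ := by
  refine ((integrable_const 1).add hμ).mono' (by fun_prop) (ae_of_all _ fun x => ?_)
  rw [norm_pow, Real.norm_eq_abs, Pi.add_apply]
  rcases le_total |x| 1 with hx | hx
  · linarith [pow_le_one₀ (n := k) (abs_nonneg x) hx, pow_nonneg (abs_nonneg x) n]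
  · linarith [pow_le_pow_right₀ hx hkn]

theorem norm_charFun_sub_sum_le {μ : Measure ℝ} [IsFiniteMeasure μ] {n : ℕ}
    (hμ : Integrable (fun x => |x| ^ n) μ) (t : ℝ) :
    ‖charFun μ t - ∑ k ∈ range n, (k ! : ℂ)⁻¹ * (t * I) ^ k * ∫ x, x ^ k ∂μ‖
      ≤ |t| ^ n / n ! * ∫ x, |x| ^ n ∂μ := by
  have hterm (k : ℕ) (hk : k ∈ range n) :
      Integrable (fun x : ℝ => (k ! : ℂ)⁻¹ * (t * I) ^ k * (x ^ k : ℝ)) μ :=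
    (integrable_pow_of_integrable_abs_pow (mem_range.1 hk).le hμ).ofReal.const_mul _
  have hsum : ∑ k ∈ range n, (k ! : ℂ)⁻¹ * (t * I) ^ k * ∫ x, x ^ k ∂μ
      = ∫ x, ∑ k ∈ range n, (k ! : ℂ)⁻¹ * (t * I) ^ k * (x ^ k : ℝ) ∂μ := by
    simp_rw [integral_finsetSum _ hterm, integral_const_mul, integral_complex_ofReal]
  rw [hsum, charFun_apply_real, ← integral_sub, ← integral_const_mul]
  · refine norm_integral_le_of_norm_le (hμ.const_mul _) (ae_of_all _ fun x => ?_)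
    have hpow (k : ℕ) : (k ! : ℂ)⁻¹ * (t * I) ^ k * (x ^ k : ℝ)
        = (k ! : ℂ)⁻¹ * ((t * x : ℝ) * I) ^ k := by
      push_cast
      ring
    simp_rw [hpow, ← ofReal_mul]
    refine (norm_exp_mul_I_sub_sum_le n (t * x)).trans_eq ?_
    rw [abs_mul, mul_pow]
    ring
  · exact (integrable_const (1 : ℝ)).mono' (by fun_prop)
      (ae_of_all _ fun x => by simp [Complex.norm_exp])
  · exact integrable_finsetSum _ hterm

lemma integral_exp_I_mul_eq_charFun (μ : Measure ℝ) (t : ℝ) :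
    ∫ x, exp (I * ((t * x : ℝ) : ℂ)) ∂μ = charFun μ t := by
  simp [charFun_apply_real, mul_comm]

section ProbabilityMeasure

variable {μ : Measure ℝ} [IsProbabilityMeasure μ]

theorem norm_charFun_sub_quadratic_le (hμ : Integrable (fun x => |x| ^ 3) μ) (t : ℝ) :
    ‖charFun μ t - (1 + t * (∫ x, x ∂μ : ℝ) * I - (t ^ 2 / 2 : ℝ) * (∫ x, x ^ 2 ∂μ : ℝ))‖
      ≤ |t| ^ 3 / 6 * ∫ x, |x| ^ 3 ∂μ := by
  convert norm_charFun_sub_sum_le hμ t using 3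
  · simp [sum_range_succ, mul_pow]
    ring
  · simp [Nat.factorial]

theorem norm_charFun_sub_linear_le (hμ : Integrable (fun x => x ^ 2) μ) (t : ℝ) :
    ‖charFun μ t - (1 + t * (∫ x, x ∂μ : ℝ) * I)‖ ≤ t ^ 2 / 2 * ∫ x, x ^ 2 ∂μ := by
  convert norm_charFun_sub_sum_le (n := 2) (by simpa only [sq_abs] using hμ) t using 2
  · simp [sum_range_succ]
    ring
  · simp
  · simp_rw [sq_abs]

end ProbabilityMeasure

/-- **Finite-difference approximation of the second moment.** For a Borel probability
measure `μ` on `ℝ` with finite third absolute moment and `δ > 0`,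
`| (2/δ²)·(1 − ∫ e^{iδx} dμ) + (2/δ³)·(∫ e^{iδ²x} dμ − 1) − ∫ x² dμ |
  ≤ (δ/3)·∫ |x|³ dμ + δ·∫ x² dμ`. -/
theorem second_moment_finite_difference (μ : Measure ℝ) [IsProbabilityMeasure μ]
    (hμ : Integrable (fun x : ℝ => |x| ^ 3) μ) (δ : ℝ) (hδ : 0 < δ) :
    ‖(2 / (δ : ℂ) ^ 2) * (1 - ∫ x : ℝ, Complex.exp (Complex.I * ((δ * x : ℝ) : ℂ)) ∂μ)
        + (2 / (δ : ℂ) ^ 3) *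
            ((∫ x : ℝ, Complex.exp (Complex.I * ((δ ^ 2 * x : ℝ) : ℂ)) ∂μ) - 1)
        - ((∫ x : ℝ, x ^ 2 ∂μ : ℝ) : ℂ)‖
      ≤ (δ / 3) * (∫ x : ℝ, |x| ^ 3 ∂μ) + δ * ∫ x : ℝ, x ^ 2 ∂μ := by
  have hE₃ := norm_charFun_sub_quadratic_le hμ δ
  have hE₂ := norm_charFun_sub_linear_le
    (integrable_pow_of_integrable_abs_pow (by norm_num) hμ) (δ ^ 2)
  rw [abs_of_pos hδ] at hE₃
  set E₃ := charFun μ δ - (1 + δ * (∫ x, x ∂μ : ℝ) * I - (δ ^ 2 / 2 : ℝ) * (∫ x, x ^ 2 ∂μ : ℝ))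
  set E₂ := charFun μ (δ ^ 2) - (1 + (δ ^ 2 : ℝ) * (∫ x, x ∂μ : ℝ) * I)
  have hδ₀ : (δ : ℂ) ≠ 0 := ofReal_ne_zero.2 hδ.ne'
  rw [integral_exp_I_mul_eq_charFun, integral_exp_I_mul_eq_charFun]
  calc _ = ‖-(((2 / δ ^ 2 : ℝ) : ℂ) * E₃) + ((2 / δ ^ 3 : ℝ) : ℂ) * E₂‖ := by
        congr 1
        simp only [E₃, E₂]
        push_cast
        field_simp
        ring
    _ ≤ 2 / δ ^ 2 * ‖E₃‖ + 2 / δ ^ 3 * ‖E₂‖ := by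
        refine (norm_add_le _ _).trans_eq ?_
        rw [norm_neg, norm_mul, norm_mul, Complex.norm_of_nonneg (by positivity),
          Complex.norm_of_nonneg (by positivity)]
    _ ≤ 2 / δ ^ 2 * (δ ^ 3 / 6 * ∫ x, |x| ^ 3 ∂μ)
          + 2 / δ ^ 3 * ((δ ^ 2) ^ 2 / 2 * ∫ x, x ^ 2 ∂μ) := by
        gcongr
    _ = δ / 3 * (∫ x, |x| ^ 3 ∂μ) + δ * ∫ x, x ^ 2 ∂μ := by
        field_simp
        ring
end
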